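/- arXiv:math/0501200 — 2 statements merged into one kernel-verified Lean document; each statement's English description precedes it below -/
import Mathlib

section
/- For an orthogonal projector P (P² = P, P† = P) depending smoothly on two variables, the matrix Euler–Lagrange equation [∂_L∂_R P, P] = 0 is equivalent to the conservation law ∂_L[∂_R P, P] + ∂_R[∂_L P, P] = 0. -/
open Matrix

attribute [local instance] Matrix.normedAddCommGroup Matrix.normedSpace

noncomputable def pL {α : Type*} [NormedAddCommGroup α] [NormedSpace ℝ α]
    (f : ℝ × ℝ → α) : ℝ × ℝ → α := fun x => fderiv ℝ f x (1, 0)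

noncomputable def pR {α : Type*} [NormedAddCommGroup α] [NormedSpace ℝ α]
    (f : ℝ × ℝ → α) : ℝ × ℝ → α := fun x => fderiv ℝ f x (0, 1)

variable {N : ℕ}
local notation "M" => Matrix (Fin N) (Fin N) ℂ

noncomputable def mulCLM (N : ℕ) : Matrix (Fin N) (Fin N) ℂ →L[ℝ] Matrix (Fin N) (Fin N) ℂ →L[ℝ] Matrix (Fin N) (Fin N) ℂ :=
  LinearMap.toContinuousLinearMap
    { toFun := fun a => LinearMap.toContinuousLinearMap (LinearMap.mul ℝ (Matrix (Fin N) (Fin N) ℂ) a)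
      map_add' := by intros; ext; simp [add_mul]
      map_smul' := by intros; ext; simp }

lemma hasFDerivAt_mul {f g : ℝ × ℝ → M} (hf : ContDiff ℝ (⊤ : ℕ∞) f) (hg : ContDiff ℝ (⊤ : ℕ∞) g) (x : ℝ × ℝ) :
    HasFDerivAt (fun y => f y * g y)
      (((mulCLM N).isBoundedBilinearMap.deriv (f x, g x)).comp
        ((fderiv ℝ f x).prod (fderiv ℝ g x))) x := by
  have h1 : HasFDerivAt f (fderiv ℝ f x) x := (hf.differentiable (by simp) x).hasFDerivAt
  have h2 : HasFDerivAt g (fderiv ℝ g x) x := (hg.differentiable (by simp) x).hasFDerivAt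
  exact HasFDerivAt.comp (f := fun y => (f y, g y)) x ((mulCLM N).isBoundedBilinearMap.hasFDerivAt (f x, g x)) (HasFDerivAt.prodMk h1 h2)

lemma fderiv_mul_apply {f g : ℝ × ℝ → M} (hf : ContDiff ℝ (⊤ : ℕ∞) f) (hg : ContDiff ℝ (⊤ : ℕ∞) g)
    (x v : ℝ × ℝ) :
    fderiv ℝ (fun y => f y * g y) x v = fderiv ℝ f x v * g x + f x * fderiv ℝ g x v := by
  have := congrArg (fun L => L v) (hasFDerivAt_mul hf hg x).fderiv
  refine this.trans ?_
  change f x * fderiv ℝ g x v + fderiv ℝ f x v * g x = _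
  exact add_comm _ _

lemma contDiff_pL {f : ℝ × ℝ → M} (hf : ContDiff ℝ (⊤ : ℕ∞) f) : ContDiff ℝ (⊤ : ℕ∞) (pL f) :=
  (hf.fderiv_right (by simp)).clm_apply contDiff_const

lemma contDiff_pR {f : ℝ × ℝ → M} (hf : ContDiff ℝ (⊤ : ℕ∞) f) : ContDiff ℝ (⊤ : ℕ∞) (pR f) :=
  (hf.fderiv_right (by simp)).clm_apply contDiff_const

lemma pderiv_clm_apply {f : ℝ × ℝ → M} (hf : ContDiff ℝ (⊤ : ℕ∞) f) (x v w : ℝ × ℝ) :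
    fderiv ℝ (fun y => fderiv ℝ f y w) x v = fderiv ℝ (fderiv ℝ f) x v w := by
  have h := congrArg (fun L => L v) (fderiv_clm_apply ((hf.fderiv_right (m := (⊤ : ℕ∞)) (by simp)).differentiable (by simp)).differentiableAt (x := x)
    (differentiableAt_const w))
  simp at h
  exact h

lemma schwarz {f : ℝ × ℝ → M} (hf : ContDiff ℝ (⊤ : ℕ∞) f) (x : ℝ × ℝ) :
    pL (pR f) x = pR (pL f) x := by
  have hs : IsSymmSndFDerivAt ℝ f x := hf.contDiffAt.isSymmSndFDerivAt (by rw [minSmoothness_of_isRCLikeNormedField]; exact WithTop.coe_le_coe.mpr (le_top : (2 : ℕ∞) ≤ ⊤))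
  show fderiv ℝ (fun y => fderiv ℝ f y (0,1)) x (1,0) = fderiv ℝ (fun y => fderiv ℝ f y (1,0)) x (0,1)
  rw [pderiv_clm_apply hf, pderiv_clm_apply hf]
  exact hs _ _

lemma fderiv_comm {f g : ℝ × ℝ → M} (hf : ContDiff ℝ (⊤ : ℕ∞) f) (hg : ContDiff ℝ (⊤ : ℕ∞) g)
    (x v : ℝ × ℝ) :
    fderiv ℝ (fun y => g y * f y - f y * g y) x v
      = (fderiv ℝ g x v * f x + g x * fderiv ℝ f x v)
        - (fderiv ℝ f x v * g x + f x * fderiv ℝ g x v) := by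
  erw [fderiv_fun_sub (hasFDerivAt_mul hg hf x).differentiableAt
      (hasFDerivAt_mul hf hg x).differentiableAt]
  exact congrArg₂ (fun a b => a - b) (fderiv_mul_apply hg hf x v) (fderiv_mul_apply hf hg x v)

theorem stmt1 {N : ℕ} (P : ℝ × ℝ → Matrix (Fin N) (Fin N) ℂ)
    (hsmooth : ContDiff ℝ (⊤ : ℕ∞) P)
    (hproj : ∀ x, P x * P x = P x) (hherm : ∀ x, (P x)ᴴ = P x) :
    (∀ x, pL (pR P) x * P x - P x * pL (pR P) x = 0) ↔
    (∀ x, pL (fun y => pR P y * P y - P y * pR P y) x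
        + pR (fun y => pL P y * P y - P y * pL P y) x = 0) := by
  have key : ∀ x, pL (fun y => pR P y * P y - P y * pR P y) x
      + pR (fun y => pL P y * P y - P y * pL P y) x
      = (pL (pR P) x * P x - P x * pL (pR P) x)
        + (pL (pR P) x * P x - P x * pL (pR P) x) := by
    intro x
    have h1 : pL (fun y => pR P y * P y - P y * pR P y) x
        = (pL (pR P) x * P x + pR P x * pL P x)
          - (pL P x * pR P x + P x * pL (pR P) x) :=
      fderiv_comm hsmooth (contDiff_pR hsmooth) x (1, 0)
    have h2 : pR (fun y => pL P y * P y - P y * pL P y) x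
        = (pR (pL P) x * P x + pL P x * pR P x)
          - (pR P x * pL P x + P x * pR (pL P) x) :=
      fderiv_comm hsmooth (contDiff_pL hsmooth) x (0, 1)
    rw [h1, h2, ← schwarz hsmooth]
    abel
  constructor
  · intro h x
    rw [key x, h x, add_zero]
  · intro h x
    have := h x
    rw [key x, ← two_smul ℝ] at this
    rcases smul_eq_zero.1 this with h2 | h2
    · norm_num at h2
    · exact h2
end

section
/- For a projector P with P² = P and matrices A, B satisfying PAP = 0, PBP = 0, (1−P)A(1−P) = 0, (1−P)B(1−P) = 0 (i.e., A, B are 'off-diagonal' with respect to P), the trace identity tr([A,B]·[A,P]) = 0 holds. -/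
open Matrix

theorem stmt11 {N : ℕ} (P A B : Matrix (Fin N) (Fin N) ℂ)
    (hP : P * P = P)
    (hA1 : P * A * P = 0) (hA2 : (1 - P) * A * (1 - P) = 0)
    (hB1 : P * B * P = 0) (hB2 : (1 - P) * B * (1 - P) = 0) :
    Matrix.trace ((A * B - B * A) * (A * P - P * A)) = 0 := by
  have hA' : A = P * A + A * P := by
    have h : (1 - P) * A * (1 - P) = A - P * A - A * P + P * A * P := by noncomm_ring
    rw [hA2, hA1, add_zero, sub_sub] at h
    exact (sub_eq_zero.mp h.symm)
  have hB' : B = P * B + B * P := by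
    have h : (1 - P) * B * (1 - P) = B - P * B - B * P + P * B * P := by noncomm_ring
    rw [hB2, hB1, add_zero, sub_sub] at h
    exact (sub_eq_zero.mp h.symm)
  have h1 : Matrix.trace (A * B * A * P) = 0 := by
    nth_rewrite 1 [hB']
    rw [show A * (P * B + B * P) * A * P
        = A * (P * B * A * P) + A * B * (P * A * P) from by noncomm_ring,
      hA1, mul_zero, add_zero,
      show A * (P * B * A * P) = (A * P * B) * (A * P) from by noncomm_ring,
      Matrix.trace_mul_comm,
      show (A * P) * (A * P * B) = A * (P * A * P) * B from by noncomm_ring,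
      hA1, mul_zero, zero_mul, Matrix.trace_zero]
  have h2 : Matrix.trace (A * B * P * A) = 0 := by
    nth_rewrite 1 [hA']
    rw [show (P * A + A * P) * B * P * A
        = P * (A * B * P * A) + A * (P * B * P) * A from by noncomm_ring,
      hB1, mul_zero, zero_mul, add_zero, Matrix.trace_mul_comm,
      show (A * B * P * A) * P = A * B * (P * A * P) from by noncomm_ring,
      hA1, mul_zero, Matrix.trace_zero]
  have h3 : Matrix.trace (B * A * A * P) = 0 := by
    nth_rewrite 1 [hA']
    rw [show B * (P * A + A * P) * A * P
        = (B * P * A * A) * P + B * A * (P * A * P) from by noncomm_ring,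
      hA1, mul_zero, add_zero, Matrix.trace_mul_comm,
      show P * (B * P * A * A) = (P * B * P) * (A * A) from by noncomm_ring,
      hB1, zero_mul, Matrix.trace_zero]
  have h4 : Matrix.trace (B * A * P * A) = 0 := by
    rw [Matrix.trace_mul_comm, show A * (B * A * P) = A * B * A * P from by noncomm_ring]
    exact h1
  rw [show (A * B - B * A) * (A * P - P * A)
      = A * B * A * P - A * B * P * A - (B * A * A * P - B * A * P * A) from by noncomm_ring]
  simp [Matrix.trace_sub, h1, h2, h3, h4]
end
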